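/- For every continuous vector field f : ℝⁿ → ℝⁿ, the Zygmund seminorm satisfies ‖f‖_Z ≤ 4 ‖f‖_Q, where ‖f‖_Z = sup_{x ∈ ℝⁿ, y ≠ 0} |f(x+y) + f(x-y) - 2f(x)| / |y| and ‖f‖_Q is the Q-seminorm. In particular, every C^Q vector field satisfies the Zygmund condition. -/

import Mathlib

/-!
The second difference `v = f(x+y) + f(x-y) - 2f(x)` is controlled direction by direction.
Along `y`, `⟨y, v⟩` is the difference of the numerators for the pair `(y, -y)` at `x`, so
`|⟨y, v⟩| ≤ Q|y|²`. For `w ⊥ y` with `|w| = |y|`, `⟨w, v⟩` is an exact combination, with weights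
`1, 1/2, 1/2`, of the differences for the pairs `(w, -w)` at `x`, `(y + w, y - w)` at `x - y` and
`(w - y, -(y + w))` at `x + y`, whose squared lengths are `|y|², 2|y|², 2|y|²`; so
`|⟨w, v⟩| ≤ 3Q|y|²`. Splitting `v` along `y` and `y^⊥` gives `|v| ≤ (1 + 3)Q|y|`.
-/

open scoped RealInnerProductSpace

section

variable {E : Type*} [NormedAddCommGroup E] [InnerProductSpace ℝ E]

theorem norm_le_of_abs_inner_le {y v : E} (hy : y ≠ 0) {A B : ℝ} (hB : 0 ≤ B)
    (hA : |⟪y, v⟫| ≤ A * ‖y‖ ^ 2)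
    (hperp : ∀ w, ⟪y, w⟫ = 0 → ‖w‖ = ‖y‖ → |⟪w, v⟫| ≤ B * ‖y‖ ^ 2) :
    ‖v‖ ≤ (A + B) * ‖y‖ := by
  have hy' : 0 < ‖y‖ := norm_pos_iff.mpr hy
  set c := ⟪y, v⟫ / ‖y‖ ^ 2
  set p := v - c • y
  have hyp : ⟪y, p⟫ = 0 := by
    simp only [p, c, inner_sub_right, real_inner_smul_right, real_inner_self_eq_norm_sq]
    field_simp
    ring
  have hcy : ‖c • y‖ ≤ A * ‖y‖ := by
    rw [norm_smul, Real.norm_eq_abs, abs_div, abs_of_nonneg (sq_nonneg ‖y‖), div_mul_eq_mul_div,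
      div_le_iff₀ (by positivity)]
    nlinarith
  have hp : ‖p‖ ≤ B * ‖y‖ := by
    rcases eq_or_ne p 0 with hp0 | hp0
    · rw [hp0, norm_zero]; positivity
    have hp' : 0 < ‖p‖ := norm_pos_iff.mpr hp0
    -- rescale `p` to the length of `y`; then `⟪w, v⟫ = ⟪w, p⟫ = ‖y‖ * ‖p‖`
    have h := hperp ((‖y‖ / ‖p‖) • p) (by rw [real_inner_smul_right, hyp, mul_zero])
      (by rw [norm_smul, Real.norm_eq_abs, abs_of_pos (by positivity), div_mul_cancel₀ _ hp'.ne'])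
    have hv : v = c • y + p := by simp [p]
    rw [hv, real_inner_smul_left, inner_add_right, real_inner_smul_right, real_inner_comm, hyp,
      real_inner_self_eq_norm_sq, mul_zero, zero_add, sq, ← mul_assoc,
      div_mul_cancel₀ _ hp'.ne', abs_of_nonneg (by positivity)] at h
    nlinarith
  calc ‖v‖ = ‖c • y + p‖ := by simp [p]
    _ ≤ ‖c • y‖ + ‖p‖ := norm_add_le _ _
    _ ≤ (A + B) * ‖y‖ := by linarith

def radialIncrement (f : E → E) (x a : E) : ℝ := ⟪a, f (x + a) - f x⟫

variable {f : E → E}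

theorem abs_radialIncrement_sub_le {Q : ℝ}
    (hQ : ∀ x a b : E, ‖a‖ = ‖b‖ → a ≠ 0 →
      |⟪a, f (x + a) - f x⟫ / ‖a‖ ^ 2 - ⟪b, f (x + b) - f x⟫ / ‖b‖ ^ 2| ≤ Q)
    {x a b : E} (hab : ‖a‖ = ‖b‖) (ha : a ≠ 0) :
    |radialIncrement f x a - radialIncrement f x b| ≤ Q * ‖a‖ ^ 2 := by
  have ha' : 0 < ‖a‖ ^ 2 := by positivity
  have h := hQ x a b hab ha
  rwa [← hab, div_sub_div_same, abs_div, abs_of_pos ha', div_le_iff₀ ha'] at h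

theorem real_inner_second_difference_self_eq (x y : E) :
    ⟪y, f (x + y) + f (x - y) - 2 • f x⟫ = radialIncrement f x y - radialIncrement f x (-y) := by
  simp only [radialIncrement, ← sub_eq_add_neg, inner_sub_right, inner_add_right, inner_neg_left,
    two_smul]
  ring

theorem real_inner_second_difference_eq (x y w : E) :
    ⟪w, f (x + y) + f (x - y) - 2 • f x⟫ =
      (radialIncrement f x w - radialIncrement f x (-w)) -
        ((radialIncrement f (x - y) (y + w) - radialIncrement f (x - y) (y - w)) +
          (radialIncrement f (x + y) (w - y) - radialIncrement f (x + y) (-(y + w)))) / 2 := by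
  simp only [radialIncrement, show x - y + (y + w) = x + w by abel,
    show x - y + (y - w) = x - w by abel, show x + y + (w - y) = x + w by abel,
    show x + y + -(y + w) = x - w by abel, ← sub_eq_add_neg]
  simp only [inner_add_left, inner_sub_left, inner_neg_left, inner_sub_right, inner_add_right,
    two_smul]
  ring

theorem abs_real_inner_second_difference_le_of_inner_eq_zero {Q : ℝ}
    (hf : ∀ x a b : E, ‖a‖ = ‖b‖ → a ≠ 0 →
      |radialIncrement f x a - radialIncrement f x b| ≤ Q * ‖a‖ ^ 2)
    {x y w : E} (hy : y ≠ 0) (hyw : ⟪y, w⟫ = 0) (hw : ‖w‖ = ‖y‖) :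
    |⟪w, f (x + y) + f (x - y) - 2 • f x⟫| ≤ 3 * Q * ‖y‖ ^ 2 := by
  have hw0 : w ≠ 0 := norm_ne_zero_iff.mp (hw ▸ norm_ne_zero_iff.mpr hy)
  have hsq : ‖y + w‖ ^ 2 = 2 * ‖y‖ ^ 2 := by rw [norm_add_sq_real, hyw, hw]; ring
  have hyw0 : y + w ≠ 0 := by
    intro h
    rw [h, norm_zero] at hsq
    have := norm_pos_iff.mpr hy
    nlinarith
  have hwy : ⟪w, y⟫ = 0 := by rwa [real_inner_comm]
  have hwy' : ‖w - y‖ = ‖y + w‖ := by rw [norm_sub_eq_norm_add hyw, add_comm]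
  have h₁ := hf x w (-w) (norm_neg w).symm hw0
  have h₂ := hf (x - y) (y + w) (y - w) (norm_sub_eq_norm_add hwy).symm hyw0
  have h₃ := hf (x + y) (w - y) (-(y + w)) (by rw [norm_neg, hwy'])
    (norm_ne_zero_iff.mp (hwy' ▸ norm_ne_zero_iff.mpr hyw0))
  rw [hw] at h₁
  rw [hsq] at h₂
  rw [hwy', hsq] at h₃
  rw [real_inner_second_difference_eq, abs_le]
  obtain ⟨h₁, h₁'⟩ := abs_le.mp h₁
  obtain ⟨h₂, h₂'⟩ := abs_le.mp h₂
  obtain ⟨h₃, h₃'⟩ := abs_le.mp h₃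
  constructor <;> linarith

end

theorem zygmund_le_four_Q_general {n : ℕ} (f : EuclideanSpace ℝ (Fin n) → EuclideanSpace ℝ (Fin n))
    (Q : ℝ)
    (hQ : ∀ (x a b : EuclideanSpace ℝ (Fin n)), ‖a‖ = ‖b‖ → a ≠ 0 →
      |(inner ℝ a (f (x + a) - f x) : ℝ) / ‖a‖ ^ 2 -
        (inner ℝ b (f (x + b) - f x) : ℝ) / ‖b‖ ^ 2| ≤ Q) :
    ∀ (x y : EuclideanSpace ℝ (Fin n)), y ≠ 0 →
      ‖f (x + y) + f (x - y) - 2 • f x‖ / ‖y‖ ≤ 4 * Q := by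
  intro x y hy
  have hf := fun z a b (hab : ‖a‖ = ‖b‖) ha => abs_radialIncrement_sub_le (x := z) hQ hab ha
  have hQ_nonneg : 0 ≤ Q := by simpa using hQ x y y rfl hy
  rw [div_le_iff₀ (norm_pos_iff.mpr hy), show 4 * Q = Q + 3 * Q by ring]
  refine norm_le_of_abs_inner_le hy (by linarith) ?_
    fun w hyw hw => abs_real_inner_second_difference_le_of_inner_eq_zero hf hy hyw hw
  rw [real_inner_second_difference_self_eq]
  exact hf x y (-y) (norm_neg y).symm hy

/-- For a continuous vector field, the Zygmund seminorm is at most four times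
the Q-seminorm: if `Q` bounds all Q-quotients, then `4 * Q` bounds all Zygmund
quotients. In particular every `C^Q` vector field satisfies the Zygmund condition. -/
theorem zygmund_le_four_Q {n : ℕ} (f : EuclideanSpace ℝ (Fin n) → EuclideanSpace ℝ (Fin n))
    (hf : Continuous f) (Q : ℝ)
    (hQ : ∀ (x a b : EuclideanSpace ℝ (Fin n)), ‖a‖ = ‖b‖ → a ≠ 0 →
      |(inner ℝ a (f (x + a) - f x) : ℝ) / ‖a‖ ^ 2 -
        (inner ℝ b (f (x + b) - f x) : ℝ) / ‖b‖ ^ 2| ≤ Q) :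
    ∀ (x y : EuclideanSpace ℝ (Fin n)), y ≠ 0 →
      ‖f (x + y) + f (x - y) - 2 • f x‖ / ‖y‖ ≤ 4 * Q :=
  zygmund_le_four_Q_general f Q hQ
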